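/- Fix reals b, σ with σ ≠ 0, d > 0 and T ≥ 2d. Let ξ = (ξ₁, ξ₂, ξ₃) be a continuous solution of the first-slice integral system on the full slice [T−2d, T−d] × [−d, 0]². Then: (i) for every t ∈ [T−2d, T−d] and every x ∈ [t, T−d], ξ₃(x, t−x, 0) ≥ 0; (ii) for every t ∈ [T−2d, T−d], b·ξ₂(t, 0) ≥ 0 and |ξ₂(t, 0)| ≤ |b|. -/

import Mathlib

/-!
On the slice, the equations at the right end give `ξ₁(T-d) = 1` and `ξ₂(T-d, ·) = b`, after
which the traces `g(u,y) = ξ₃(y, u-y, 0)`, `h(u,y) = ξ₃(y, 0, u-y)` and `p(y) = ξ₂(y, 0)`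
on the triangle `T-2d ≤ u ≤ y ≤ T-d` satisfy a closed quadratic Volterra system with final
data `b²`, `b²`, `b`. This system is solved by `g = h = b·P`, `p = P` with
`P(y) = b / (1 + σ⁻² b² (T-d-y))`, the solution of the Riccati equation `P' = σ⁻² b P²`.
Uniqueness follows from a Picard iteration: the deviation from this solution at height `y`
is bounded by `C (K (T-d-y))ⁿ / n!` for every `n`. The sign and size of `P` give the claims.
-/

open Set MeasureTheory

/-- The first-slice integral system on the full slice `[T-2d, T-d] × [-d,0]²`. -/
def isSolutionSlice (b σ T d : ℝ) (ξ₁ : ℝ → ℝ) (ξ₂ : ℝ → ℝ → ℝ) (ξ₃ : ℝ → ℝ → ℝ → ℝ) : Prop :=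
  ∀ t ∈ Icc (T - 2 * d) (T - d), ∀ s ∈ Icc (-d) 0, ∀ r ∈ Icc (-d) 0,
    ξ₁ t = 1 - (σ ^ 2)⁻¹ * ∫ x in t..(T - d), (ξ₂ x 0) ^ 2 ∧
    ξ₂ t s = b * ξ₁ (min (T - d) (t + s + d)) -
      (σ ^ 2)⁻¹ * ∫ x in t..(min (T - d) (t + s + d)), ξ₂ x 0 * ξ₃ x (t + s - x) 0 ∧
    ξ₃ t s r = b * ξ₂ (min (T - d) (t + min s r + d)) (|s - r| - d) -
      (σ ^ 2)⁻¹ * ∫ x in t..(min (T - d) (t + min s r + d)),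
        ξ₃ x (t + s - x) 0 * ξ₃ x 0 (t + r - x)

open intervalIntegral

theorem mul_integral_mul_pow_sub_div_factorial (C K y e : ℝ) (n : ℕ) :
    K * ∫ z in y..e, C * (K * (e - z)) ^ n / n.factorial
      = C * (K * (e - y)) ^ (n + 1) / (n + 1).factorial := by
  simp only [mul_pow, intervalIntegral.integral_div, intervalIntegral.integral_const_mul]
  rw [integral_comp_sub_left (fun z => z ^ n), integral_pow, sub_self,
    zero_pow n.succ_ne_zero, Nat.factorial_succ]
  push_cast
  field_simp
  ring

theorem nonpos_of_le_mul_integral {α : Type*} {s : Set α} {C K e : ℝ} {ε y : α → ℝ}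
    (hC : ∀ i ∈ s, ε i ≤ C)
    (h : ∀ φ : ℝ → ℝ, Continuous φ → (∀ i ∈ s, ε i ≤ φ (y i)) →
      ∀ i ∈ s, ε i ≤ K * ∫ z in y i..e, φ z) :
    ∀ i ∈ s, ε i ≤ 0 := by
  have picard (n : ℕ) : ∀ i ∈ s, ε i ≤ C * (K * (e - y i)) ^ n / n.factorial := by
    induction n with
    | zero => simpa using hC
    | succ n ih =>
      intro i hi
      rw [← mul_integral_mul_pow_sub_div_factorial]
      exact h _ (by fun_prop) ih i hi
  intro i hi
  have hlim := (FloorSemiring.tendsto_pow_div_factorial_atTop (K * (e - y i))).const_mul C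
  rw [mul_zero] at hlim
  exact ge_of_tendsto' hlim fun n => (picard n i hi).trans_eq (mul_div_assoc _ _ _)

theorem abs_integral_mul_sub_integral_mul_le {f₁ f₂ w₁ w₂ φ : ℝ → ℝ} {y e M : ℝ} (hye : y ≤ e)
    (hf : IntervalIntegrable (fun z => f₁ z * f₂ z) volume y e)
    (hw : IntervalIntegrable (fun z => w₁ z * w₂ z) volume y e)
    (hφ : IntervalIntegrable φ volume y e)
    (hf₁ : ∀ z ∈ Icc y e, |f₁ z| ≤ M) (hw₂ : ∀ z ∈ Icc y e, |w₂ z| ≤ M)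
    (h₁ : ∀ z ∈ Icc y e, |f₁ z - w₁ z| ≤ φ z) (h₂ : ∀ z ∈ Icc y e, |f₂ z - w₂ z| ≤ φ z) :
    |(∫ z in y..e, f₁ z * f₂ z) - ∫ z in y..e, w₁ z * w₂ z| ≤ 2 * M * ∫ z in y..e, φ z := by
  rw [← integral_sub hf hw, ← intervalIntegral.integral_const_mul, ← Real.norm_eq_abs]
  refine norm_integral_le_of_norm_le hye (ae_of_all _ fun z hz => ?_) (hφ.const_mul _)
  have hz : z ∈ Icc y e := Ioc_subset_Icc_self hz
  have hM : 0 ≤ M := (abs_nonneg _).trans (hf₁ z hz)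
  calc ‖f₁ z * f₂ z - w₁ z * w₂ z‖
      = |f₁ z * (f₂ z - w₂ z) + (f₁ z - w₁ z) * w₂ z| := by rw [Real.norm_eq_abs]; ring_nf
    _ ≤ |f₁ z| * |f₂ z - w₂ z| + |f₁ z - w₁ z| * |w₂ z| := by
        rw [← abs_mul, ← abs_mul]; exact abs_add_le _ _
    _ ≤ M * φ z + φ z * M :=
        add_le_add (mul_le_mul (hf₁ z hz) (h₂ z hz) (abs_nonneg _) hM)
          (mul_le_mul (h₁ z hz) (hw₂ z hz) (abs_nonneg _) ((abs_nonneg _).trans (h₁ z hz)))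
    _ = 2 * M * φ z := by ring

theorem abs_sub_mul_integral_mul_sub_le {f₁ f₂ w₁ w₂ φ : ℝ → ℝ} {κ c y e M : ℝ} (hκ : 0 ≤ κ)
    (hye : y ≤ e) (hf₁ : ContinuousOn f₁ (Icc y e)) (hf₂ : ContinuousOn f₂ (Icc y e))
    (hw₁ : ContinuousOn w₁ (Icc y e)) (hw₂ : ContinuousOn w₂ (Icc y e)) (hφ : Continuous φ)
    (hM₁ : ∀ z ∈ Icc y e, |f₁ z| ≤ M) (hM₂ : ∀ z ∈ Icc y e, |w₂ z| ≤ M)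
    (h₁ : ∀ z ∈ Icc y e, |f₁ z - w₁ z| ≤ φ z) (h₂ : ∀ z ∈ Icc y e, |f₂ z - w₂ z| ≤ φ z) :
    |(c - κ * ∫ z in y..e, f₁ z * f₂ z) - (c - κ * ∫ z in y..e, w₁ z * w₂ z)|
      ≤ κ * (2 * M) * ∫ z in y..e, φ z := by
  rw [sub_sub_sub_cancel_left, ← mul_sub, abs_mul, abs_of_nonneg hκ, abs_sub_comm, mul_assoc]
  exact mul_le_mul_of_nonneg_left (abs_integral_mul_sub_integral_mul_le hye
    ((hf₁.mul hf₂).intervalIntegrable_of_Icc hye) ((hw₁.mul hw₂).intervalIntegrable_of_Icc hye)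
    (hφ.intervalIntegrable _ _) hM₁ hM₂ h₁ h₂) hκ

noncomputable def riccati (κ b e y : ℝ) : ℝ := b / (1 + κ * b ^ 2 * (e - y))

section Riccati

variable {κ b e y : ℝ}

theorem one_le_riccati_denom (hκ : 0 ≤ κ) (hy : y ≤ e) : 1 ≤ 1 + κ * b ^ 2 * (e - y) :=
  le_add_of_nonneg_right (mul_nonneg (by positivity) (sub_nonneg.2 hy))

theorem riccati_denom_pos (hκ : 0 ≤ κ) (hy : y ≤ e) : 0 < 1 + κ * b ^ 2 * (e - y) :=
  one_pos.trans_le (one_le_riccati_denom hκ hy)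

theorem continuousOn_riccati (hκ : 0 ≤ κ) : ContinuousOn (riccati κ b e) (Iic e) :=
  continuousOn_const.div (by fun_prop) fun _ hy => (riccati_denom_pos hκ hy).ne'

theorem hasDerivAt_riccati (hκ : 0 ≤ κ) (hy : y ≤ e) :
    HasDerivAt (riccati κ b e) (κ * (riccati κ b e y * (b * riccati κ b e y))) y := by
  have hden := (riccati_denom_pos (b := b) hκ hy).ne'
  have hden' : HasDerivAt (fun z => 1 + κ * b ^ 2 * (e - z)) (κ * b ^ 2 * -1) y :=
    (((hasDerivAt_id y).const_sub e).const_mul (κ * b ^ 2)).const_add 1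
  refine ((hasDerivAt_const y b).div hden' hden).congr_deriv ?_
  simp only [riccati]
  field_simp
  ring

theorem riccati_eq_sub_integral (hκ : 0 ≤ κ) (hy : y ≤ e) :
    riccati κ b e y = b - κ * ∫ z in y..e, riccati κ b e z * (b * riccati κ b e z) := by
  have hIcc : ∀ z ∈ uIcc y e, z ≤ e := fun z hz => (uIcc_of_le hy ▸ hz).2
  have hcont : ContinuousOn (riccati κ b e) (uIcc y e) := (continuousOn_riccati hκ).mono hIcc
  rw [← intervalIntegral.integral_const_mul, integral_eq_sub_of_hasDerivAt
    (fun z hz => hasDerivAt_riccati hκ (hIcc z hz))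
    (continuousOn_const.mul (hcont.mul (continuousOn_const.mul hcont))).intervalIntegrable]
  simp [riccati]

theorem mul_riccati_eq_sub_integral (hκ : 0 ≤ κ) (hy : y ≤ e) :
    b * riccati κ b e y
      = b ^ 2 - κ * ∫ z in y..e, b * riccati κ b e z * (b * riccati κ b e z) := by
  conv_lhs => rw [riccati_eq_sub_integral hκ hy]
  simp only [mul_assoc, intervalIntegral.integral_const_mul]
  ring

theorem mul_riccati_nonneg (hκ : 0 ≤ κ) (hy : y ≤ e) : 0 ≤ b * riccati κ b e y := by
  rw [riccati, ← mul_div_assoc, ← sq]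
  exact div_nonneg (sq_nonneg b) (riccati_denom_pos hκ hy).le

theorem abs_riccati_le (hκ : 0 ≤ κ) (hy : y ≤ e) : |riccati κ b e y| ≤ |b| := by
  have hden := riccati_denom_pos (b := b) hκ hy
  rw [riccati, abs_div, abs_of_pos hden]
  exact div_le_self (abs_nonneg b) (one_le_riccati_denom hκ hy)

end Riccati

def triangle (a e : ℝ) : Set (ℝ × ℝ) := {q | a ≤ q.1 ∧ q.1 ≤ q.2 ∧ q.2 ≤ e}

theorem isCompact_triangle (a e : ℝ) : IsCompact (triangle a e) := by
  refine (isCompact_Icc (a := (a, a)) (b := (e, e))).of_isClosed_subset ?_ ?_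
  · exact (isClosed_le continuous_const continuous_fst).inter
      ((isClosed_le continuous_fst continuous_snd).inter
        (isClosed_le continuous_snd continuous_const))
  · rintro ⟨u, y⟩ ⟨hau, huy, hye⟩
    exact ⟨⟨hau, hau.trans huy⟩, huy.trans hye, hye⟩

theorem ContinuousOn.triangle_section {a e u : ℝ} {g : ℝ → ℝ → ℝ}
    (hg : ContinuousOn (fun q : ℝ × ℝ => g q.1 q.2) (triangle a e)) (hu : a ≤ u) :
    ContinuousOn (g u) (Icc u e) :=
  hg.comp (Continuous.prodMk_right u).continuousOn fun _ hz => ⟨hu, hz.1, hz.2⟩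

section VolterraSystem

variable {a e b κ : ℝ} {g h : ℝ → ℝ → ℝ} {p : ℝ → ℝ}

noncomputable def riccatiDeviation (κ b e : ℝ) (g h : ℝ → ℝ → ℝ) (p : ℝ → ℝ) (u y : ℝ) : ℝ :=
  max (max |g u y - b * riccati κ b e y| |h u y - b * riccati κ b e y|) |p y - riccati κ b e y|

variable {u y : ℝ}

theorem le_riccatiDeviation_left :
    |g u y - b * riccati κ b e y| ≤ riccatiDeviation κ b e g h p u y :=
  (le_max_left _ _).trans (le_max_left _ _)

theorem le_riccatiDeviation_mid :
    |h u y - b * riccati κ b e y| ≤ riccatiDeviation κ b e g h p u y :=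
  (le_max_right _ _).trans (le_max_left _ _)

theorem le_riccatiDeviation_right : |p y - riccati κ b e y| ≤ riccatiDeviation κ b e g h p u y :=
  le_max_right _ _

theorem continuousOn_riccatiDeviation (hκ : 0 ≤ κ)
    (hg : ContinuousOn (fun q : ℝ × ℝ => g q.1 q.2) (triangle a e))
    (hh : ContinuousOn (fun q : ℝ × ℝ => h q.1 q.2) (triangle a e))
    (hp : ContinuousOn p (Icc a e)) :
    ContinuousOn (fun q : ℝ × ℝ => riccatiDeviation κ b e g h p q.1 q.2) (triangle a e) := by
  have hsnd : MapsTo Prod.snd (triangle a e) (Icc a e) := fun q hq => ⟨hq.1.trans hq.2.1, hq.2.2⟩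
  have hR : ContinuousOn (fun q : ℝ × ℝ => riccati κ b e q.2) (triangle a e) :=
    ((continuousOn_riccati hκ).mono Icc_subset_Iic_self).comp continuous_snd.continuousOn hsnd
  have hG : ContinuousOn (fun q : ℝ × ℝ => b * riccati κ b e q.2) (triangle a e) :=
    continuousOn_const.mul hR
  have hp' : ContinuousOn (fun q : ℝ × ℝ => p q.2) (triangle a e) :=
    hp.comp continuous_snd.continuousOn hsnd
  exact ContinuousOn.sup (ContinuousOn.sup (hg.sub hG).abs (hh.sub hG).abs) (hp'.sub hR).abs

theorem riccatiDeviation_le_mul_integral (hκ : 0 ≤ κ)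
    (hg : ContinuousOn (fun q : ℝ × ℝ => g q.1 q.2) (triangle a e))
    (hh : ContinuousOn (fun q : ℝ × ℝ => h q.1 q.2) (triangle a e))
    (hp : ContinuousOn p (Icc a e))
    (hg_eq : ∀ u y, (u, y) ∈ triangle a e → g u y = b ^ 2 - κ * ∫ z in y..e, g u z * h y z)
    (hh_eq : ∀ u y, (u, y) ∈ triangle a e → h u y = b ^ 2 - κ * ∫ z in y..e, g y z * h u z)
    (hp_eq : ∀ y ∈ Icc a e, p y = b - κ * ∫ z in y..e, p z * g y z) {M : ℝ}
    (hgM : ∀ q ∈ triangle a e, |g q.1 q.2| ≤ M) (hpM : ∀ z ∈ Icc a e, |p z| ≤ M)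
    (hGM : ∀ z ∈ Icc a e, |b * riccati κ b e z| ≤ M) {φ : ℝ → ℝ} (hφ : Continuous φ)
    (hdev : ∀ q ∈ triangle a e, riccatiDeviation κ b e g h p q.1 q.2 ≤ φ q.2)
    (huy : (u, y) ∈ triangle a e) :
    riccatiDeviation κ b e g h p u y ≤ κ * (2 * M) * ∫ z in y..e, φ z := by
  obtain ⟨hau, hay, hye⟩ : a ≤ u ∧ u ≤ y ∧ y ≤ e := huy
  have hsub : Icc y e ⊆ Icc a e := Icc_subset_Icc_left (hau.trans hay)
  have hu (z) (hz : z ∈ Icc y e) : (u, z) ∈ triangle a e := ⟨hau, hay.trans hz.1, hz.2⟩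
  have hy (z) (hz : z ∈ Icc y e) : (y, z) ∈ triangle a e := ⟨hau.trans hay, hz.1, hz.2⟩
  have hR : ContinuousOn (riccati κ b e) (Icc y e) :=
    (continuousOn_riccati hκ).mono Icc_subset_Iic_self
  have hG := continuousOn_const (c := b) |>.mul hR
  have hgu := (hg.triangle_section hau).mono (Icc_subset_Icc_left hay)
  have hgy := hg.triangle_section (hau.trans hay)
  have hhu := (hh.triangle_section hau).mono (Icc_subset_Icc_left hay)
  have hhy := hh.triangle_section (hau.trans hay)
  have hGM' (z) (hz : z ∈ Icc y e) := hGM z (hsub hz)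
  refine max_le (max_le ?_ ?_) ?_
  · rw [hg_eq u y ⟨hau, hay, hye⟩, mul_riccati_eq_sub_integral hκ hye]
    refine abs_sub_mul_integral_mul_sub_le hκ hye hgu hhy hG hG hφ (fun z hz => hgM _ (hu z hz))
      hGM' (fun z hz => ?_) (fun z hz => ?_)
    · exact le_riccatiDeviation_left.trans (hdev _ (hu z hz))
    · exact le_riccatiDeviation_mid.trans (hdev _ (hy z hz))
  · rw [hh_eq u y ⟨hau, hay, hye⟩, mul_riccati_eq_sub_integral hκ hye]
    refine abs_sub_mul_integral_mul_sub_le hκ hye hgy hhu hG hG hφ (fun z hz => hgM _ (hy z hz))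
      hGM' (fun z hz => ?_) (fun z hz => ?_)
    · exact le_riccatiDeviation_left.trans (hdev _ (hy z hz))
    · exact le_riccatiDeviation_mid.trans (hdev _ (hu z hz))
  · rw [hp_eq y ⟨hau.trans hay, hye⟩, riccati_eq_sub_integral hκ hye]
    refine abs_sub_mul_integral_mul_sub_le hκ hye (hp.mono hsub) hgy hR hG hφ
      (fun z hz => hpM z (hsub hz)) hGM' (fun z hz => ?_) (fun z hz => ?_)
    · exact le_riccatiDeviation_right.trans (hdev _ (hy z hz))
    · exact le_riccatiDeviation_left.trans (hdev _ (hy z hz))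

theorem volterra_system_eq_riccati (hκ : 0 ≤ κ)
    (hg : ContinuousOn (fun q : ℝ × ℝ => g q.1 q.2) (triangle a e))
    (hh : ContinuousOn (fun q : ℝ × ℝ => h q.1 q.2) (triangle a e))
    (hp : ContinuousOn p (Icc a e))
    (hg_eq : ∀ u y, (u, y) ∈ triangle a e → g u y = b ^ 2 - κ * ∫ z in y..e, g u z * h y z)
    (hh_eq : ∀ u y, (u, y) ∈ triangle a e → h u y = b ^ 2 - κ * ∫ z in y..e, g y z * h u z)
    (hp_eq : ∀ y ∈ Icc a e, p y = b - κ * ∫ z in y..e, p z * g y z)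
    (huy : (u, y) ∈ triangle a e) :
    g u y = b * riccati κ b e y ∧ h u y = b * riccati κ b e y ∧ p y = riccati κ b e y := by
  have hG : ContinuousOn (fun z => b * riccati κ b e z) (Icc a e) :=
    continuousOn_const.mul ((continuousOn_riccati hκ).mono Icc_subset_Iic_self)
  obtain ⟨C, hC⟩ := (isCompact_triangle a e).exists_bound_of_continuousOn
    (continuousOn_riccatiDeviation (b := b) hκ hg hh hp)
  obtain ⟨Mg, hMg⟩ := (isCompact_triangle a e).exists_bound_of_continuousOn hg
  obtain ⟨Mp, hMp⟩ := isCompact_Icc.exists_bound_of_continuousOn hp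
  obtain ⟨MG, hMG⟩ := isCompact_Icc.exists_bound_of_continuousOn hG
  have hzero := nonpos_of_le_mul_integral (s := triangle a e) (y := Prod.snd)
    (ε := fun q => riccatiDeviation κ b e g h p q.1 q.2) (K := κ * (2 * max Mg (max Mp MG)))
    (fun q hq => (le_abs_self _).trans (hC q hq))
    (fun φ hφ hdev q hq => riccatiDeviation_le_mul_integral hκ hg hh hp hg_eq hh_eq hp_eq
      (fun q hq => (hMg q hq).trans (le_max_left _ _))
      (fun z hz => (hMp z hz).trans ((le_max_left _ _).trans (le_max_right _ _)))
      (fun z hz => (hMG z hz).trans ((le_max_right _ _).trans (le_max_right _ _))) hφ hdev hq)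
    (u, y) huy
  simp only [riccatiDeviation, max_le_iff, abs_nonpos_iff, sub_eq_zero] at hzero
  exact ⟨hzero.1.1, hzero.1.2, hzero.2⟩

end VolterraSystem

namespace isSolutionSlice

variable {b σ T d : ℝ} {ξ₁ : ℝ → ℝ} {ξ₂ : ℝ → ℝ → ℝ} {ξ₃ : ℝ → ℝ → ℝ → ℝ}

theorem xi₁_right (hsol : isSolutionSlice b σ T d ξ₁ ξ₂ ξ₃) (hd : 0 ≤ d) : ξ₁ (T - d) = 1 := by
  have h0 : (0 : ℝ) ∈ Icc (-d) 0 := ⟨by linarith, le_rfl⟩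
  simpa using (hsol (T - d) ⟨by linarith, le_rfl⟩ 0 h0 0 h0).1

theorem xi₂_right (hsol : isSolutionSlice b σ T d ξ₁ ξ₂ ξ₃) (hd : 0 ≤ d) {s : ℝ}
    (hs : s ∈ Icc (-d) 0) : ξ₂ (T - d) s = b := by
  have h := (hsol (T - d) ⟨by linarith, le_rfl⟩ s hs 0 ⟨by linarith, le_rfl⟩).2.1
  rwa [min_eq_left (by linarith [hs.1]), hsol.xi₁_right hd, mul_one, integral_same, mul_zero,
    sub_zero] at h

theorem xi₂_eq (hsol : isSolutionSlice b σ T d ξ₁ ξ₂ ξ₃) (hd : 0 ≤ d) {t : ℝ}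
    (ht : t ∈ Icc (T - 2 * d) (T - d)) :
    ξ₂ t 0 = b - (σ ^ 2)⁻¹ * ∫ x in t..(T - d), ξ₂ x 0 * ξ₃ x (t - x) 0 := by
  have h := (hsol t ht 0 ⟨by linarith, le_rfl⟩ 0 ⟨by linarith, le_rfl⟩).2.1
  simp only [add_zero] at h
  rwa [min_eq_left (by linarith [ht.1]), hsol.xi₁_right hd, mul_one] at h

theorem xi₃_eq_left (hsol : isSolutionSlice b σ T d ξ₁ ξ₂ ξ₃) (hd : 0 ≤ d) {t x : ℝ}
    (htx : (t, x) ∈ triangle (T - 2 * d) (T - d)) :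
    ξ₃ x (t - x) 0 = b ^ 2 - (σ ^ 2)⁻¹ * ∫ y in x..(T - d), ξ₃ y (t - y) 0 * ξ₃ y 0 (x - y) := by
  obtain ⟨h₁, h₂, h₃⟩ : T - 2 * d ≤ t ∧ t ≤ x ∧ x ≤ T - d := htx
  have h := (hsol x ⟨h₁.trans h₂, h₃⟩ (t - x) ⟨by linarith, by linarith⟩
    0 ⟨by linarith, le_rfl⟩).2.2
  rw [min_eq_left (show t - x ≤ 0 by linarith), add_sub_cancel,
    min_eq_left (show T - d ≤ t + d by linarith), sub_zero, abs_of_nonpos (by linarith),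
    hsol.xi₂_right hd ⟨by linarith, by linarith⟩, ← sq] at h
  simpa only [add_sub_cancel, add_zero] using h

theorem xi₃_eq_right (hsol : isSolutionSlice b σ T d ξ₁ ξ₂ ξ₃) (hd : 0 ≤ d) {t x : ℝ}
    (htx : (t, x) ∈ triangle (T - 2 * d) (T - d)) :
    ξ₃ x 0 (t - x) = b ^ 2 - (σ ^ 2)⁻¹ * ∫ y in x..(T - d), ξ₃ y (x - y) 0 * ξ₃ y 0 (t - y) := by
  obtain ⟨h₁, h₂, h₃⟩ : T - 2 * d ≤ t ∧ t ≤ x ∧ x ≤ T - d := htx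
  have h := (hsol x ⟨h₁.trans h₂, h₃⟩ 0 ⟨by linarith, le_rfl⟩
    (t - x) ⟨by linarith, by linarith⟩).2.2
  rw [min_eq_right (show t - x ≤ 0 by linarith), add_sub_cancel,
    min_eq_left (show T - d ≤ t + d by linarith), zero_sub, abs_neg, abs_of_nonpos (by linarith),
    hsol.xi₂_right hd ⟨by linarith, by linarith⟩, ← sq] at h
  simpa only [add_sub_cancel, add_zero] using h

end isSolutionSlice

section Continuity

variable {T d : ℝ}

theorem ContinuousOn.slice_diag_left {ξ₃ : ℝ → ℝ → ℝ → ℝ} (hd : 0 ≤ d)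
    (hc : ContinuousOn (fun p : ℝ × ℝ × ℝ => ξ₃ p.1 p.2.1 p.2.2)
      (Icc (T - 2 * d) (T - d) ×ˢ Icc (-d) 0 ×ˢ Icc (-d) 0)) :
    ContinuousOn (fun q : ℝ × ℝ => ξ₃ q.2 (q.1 - q.2) 0) (triangle (T - 2 * d) (T - d)) :=
  hc.comp (f := fun q : ℝ × ℝ => (q.2, q.1 - q.2, (0 : ℝ))) (by fun_prop)
    fun _ ⟨h₁, h₂, h₃⟩ => ⟨⟨h₁.trans h₂, h₃⟩, ⟨by linarith, by linarith⟩, by linarith, le_rfl⟩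

theorem ContinuousOn.slice_diag_right {ξ₃ : ℝ → ℝ → ℝ → ℝ} (hd : 0 ≤ d)
    (hc : ContinuousOn (fun p : ℝ × ℝ × ℝ => ξ₃ p.1 p.2.1 p.2.2)
      (Icc (T - 2 * d) (T - d) ×ˢ Icc (-d) 0 ×ˢ Icc (-d) 0)) :
    ContinuousOn (fun q : ℝ × ℝ => ξ₃ q.2 0 (q.1 - q.2)) (triangle (T - 2 * d) (T - d)) :=
  hc.comp (f := fun q : ℝ × ℝ => (q.2, (0 : ℝ), q.1 - q.2)) (by fun_prop)
    fun _ ⟨h₁, h₂, h₃⟩ => ⟨⟨h₁.trans h₂, h₃⟩, ⟨by linarith, le_rfl⟩, by linarith, by linarith⟩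

theorem ContinuousOn.slice_zero {ξ₂ : ℝ → ℝ → ℝ} (hd : 0 ≤ d)
    (hc : ContinuousOn (fun p : ℝ × ℝ => ξ₂ p.1 p.2) (Icc (T - 2 * d) (T - d) ×ˢ Icc (-d) 0)) :
    ContinuousOn (fun y => ξ₂ y 0) (Icc (T - 2 * d) (T - d)) :=
  hc.comp (f := fun y => (y, (0 : ℝ))) (by fun_prop) fun _ hy => ⟨hy, by linarith, le_rfl⟩

end Continuity

theorem stmt_8_general (b σ d T : ℝ) (hd : 0 < d)
    (ξ₁ : ℝ → ℝ) (ξ₂ : ℝ → ℝ → ℝ) (ξ₃ : ℝ → ℝ → ℝ → ℝ)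
    (hc2 : ContinuousOn (fun p : ℝ × ℝ => ξ₂ p.1 p.2)
      (Icc (T - 2 * d) (T - d) ×ˢ Icc (-d) 0))
    (hc3 : ContinuousOn (fun p : ℝ × ℝ × ℝ => ξ₃ p.1 p.2.1 p.2.2)
      (Icc (T - 2 * d) (T - d) ×ˢ Icc (-d) 0 ×ˢ Icc (-d) 0))
    (hsol : isSolutionSlice b σ T d ξ₁ ξ₂ ξ₃) :
    (∀ t ∈ Icc (T - 2 * d) (T - d), ∀ x ∈ Icc t (T - d), 0 ≤ ξ₃ x (t - x) 0) ∧
    (∀ t ∈ Icc (T - 2 * d) (T - d), 0 ≤ b * ξ₂ t 0 ∧ |ξ₂ t 0| ≤ |b|) := by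
  have hκ : 0 ≤ (σ ^ 2)⁻¹ := by positivity
  have hriccati {t x : ℝ} (htx : (t, x) ∈ triangle (T - 2 * d) (T - d)) :=
    volterra_system_eq_riccati (g := fun t x => ξ₃ x (t - x) 0) (h := fun t x => ξ₃ x 0 (t - x))
      hκ (hc3.slice_diag_left hd.le) (hc3.slice_diag_right hd.le) (hc2.slice_zero hd.le)
      (fun _ _ h => hsol.xi₃_eq_left hd.le h) (fun _ _ h => hsol.xi₃_eq_right hd.le h)
      (fun _ hy => hsol.xi₂_eq hd.le hy) htx
  refine ⟨fun t ht x hx => ?_, fun t ht => ?_⟩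
  · rw [(hriccati ⟨ht.1, hx.1, hx.2⟩).1]
    exact mul_riccati_nonneg hκ hx.2
  · rw [(hriccati ⟨ht.1, le_rfl, ht.2⟩).2.2]
    exact ⟨mul_riccati_nonneg hκ ht.2, abs_riccati_le hκ ht.2⟩

/-- For a continuous solution of the first-slice integral system:
(i) `ξ₃(x, t-x, 0) ≥ 0` for `t ∈ [T-2d, T-d]` and `x ∈ [t, T-d]`;
(ii) `b·ξ₂(t,0) ≥ 0` and `|ξ₂(t,0)| ≤ |b|` for `t ∈ [T-2d, T-d]`. -/
theorem stmt_8 (b σ d T : ℝ) (hσ : σ ≠ 0) (hd : 0 < d) (hT : 2 * d ≤ T)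
    (ξ₁ : ℝ → ℝ) (ξ₂ : ℝ → ℝ → ℝ) (ξ₃ : ℝ → ℝ → ℝ → ℝ)
    (hc1 : ContinuousOn ξ₁ (Icc (T - 2 * d) (T - d)))
    (hc2 : ContinuousOn (fun p : ℝ × ℝ => ξ₂ p.1 p.2)
      (Icc (T - 2 * d) (T - d) ×ˢ Icc (-d) 0))
    (hc3 : ContinuousOn (fun p : ℝ × ℝ × ℝ => ξ₃ p.1 p.2.1 p.2.2)
      (Icc (T - 2 * d) (T - d) ×ˢ Icc (-d) 0 ×ˢ Icc (-d) 0))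
    (hsol : isSolutionSlice b σ T d ξ₁ ξ₂ ξ₃) :
    (∀ t ∈ Icc (T - 2 * d) (T - d), ∀ x ∈ Icc t (T - d), 0 ≤ ξ₃ x (t - x) 0) ∧
    (∀ t ∈ Icc (T - 2 * d) (T - d), 0 ≤ b * ξ₂ t 0 ∧ |ξ₂ t 0| ≤ |b|) :=
  stmt_8_general b σ d T hd ξ₁ ξ₂ ξ₃ hc2 hc3 hsol
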